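/- arXiv:2601.22762 — 2 statements merged into one kernel-verified Lean document; each statement's English description precedes it below -/
import Mathlib

section
/- For any bivariate polynomial P of degree at most n in the first variable and at most m in the second variable, the sup-norm bound ‖P‖_∞ ≤ (2/π)·√((n+1)(m+1)) · ‖P‖_{L_{2,ω}} holds, where ‖P‖_{L_{2,ω}}² = ∫_{[-1,1]²} ω(t,τ)|P(t,τ)|² dt dτ and ω(t,τ) = (1-t²)^{-1/2}(1-τ²)^{-1/2}. -/
open Real Set MvPolynomial

/-- The bivariate Chebyshev weight `ω(t,τ) = (1-t²)^(-1/2) (1-τ²)^(-1/2)`. -/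
noncomputable def chebWeight2 (t τ : ℝ) : ℝ :=
  (1 - t ^ 2) ^ (-(1 : ℝ) / 2) * (1 - τ ^ 2) ^ (-(1 : ℝ) / 2)

open MeasureTheory intervalIntegral Filter Topology

noncomputable def chebW (x : ℝ) : ℝ := (1 - x ^ 2) ^ (-(1 : ℝ) / 2)

lemma chebW_contOn : ContinuousOn chebW (Ioo (-1 : ℝ) 1) := by
  apply ContinuousOn.rpow_const (by fun_prop)
  intro x hx
  left
  simp only [mem_Ioo] at hx
  nlinarith [hx.1, hx.2]

lemma chebW_integrableOn : IntegrableOn chebW (Ioo (-1 : ℝ) 1) := by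
  have hsplit : Ioo (-1 : ℝ) 1 = Ioc (-1 : ℝ) 0 ∪ Ioo (0 : ℝ) 1 :=
    (Set.Ioc_union_Ioo_eq_Ioo (by norm_num) (by norm_num)).symm
  rw [hsplit]
  apply IntegrableOn.union
  · -- dominate by (x+1)^(-1/2)
    have hint : IntervalIntegrable (fun x : ℝ => (x + 1) ^ (-(1:ℝ)/2)) volume (-1) 0 := by
      have := (intervalIntegral.intervalIntegrable_rpow' (a := 0) (b := 1)
        (r := -(1:ℝ)/2) (by norm_num)).comp_add_right 1
      simpa using this
    have hint' : IntegrableOn (fun x : ℝ => (x + 1) ^ (-(1:ℝ)/2)) (Ioc (-1 : ℝ) 0) := by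
      rwa [intervalIntegrable_iff_integrableOn_Ioc_of_le (by norm_num)] at hint
    apply Integrable.mono hint'
    · exact (chebW_contOn.mono (by intro x hx; simp only [mem_Ioc, mem_Ioo] at *; constructor <;> linarith [hx.1, hx.2])).aestronglyMeasurable measurableSet_Ioc
    · filter_upwards [ae_restrict_mem measurableSet_Ioc] with x hx
      simp only [mem_Ioc] at hx
      have h1 : (0:ℝ) < x + 1 := by linarith
      have h2 : x + 1 ≤ 1 - x ^ 2 := by nlinarith
      rw [Real.norm_eq_abs, Real.norm_eq_abs, chebW,
        abs_of_nonneg (Real.rpow_nonneg (by nlinarith : (0:ℝ) ≤ 1 - x^2) _),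
        abs_of_nonneg (Real.rpow_nonneg (by linarith : (0:ℝ) ≤ x + 1) _)]
      exact Real.rpow_le_rpow_of_nonpos h1 h2 (by norm_num)
  · have hint : IntervalIntegrable (fun x : ℝ => (1 - x) ^ (-(1:ℝ)/2)) volume 0 1 := by
      have := (intervalIntegral.intervalIntegrable_rpow' (a := 0) (b := 1)
        (r := -(1:ℝ)/2) (by norm_num)).comp_sub_left 1
      simpa using this.symm
    have hint' : IntegrableOn (fun x : ℝ => (1 - x) ^ (-(1:ℝ)/2)) (Ioc (0 : ℝ) 1) := by
      rwa [intervalIntegrable_iff_integrableOn_Ioc_of_le (by norm_num)] at hint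
    apply Integrable.mono (hint'.mono_set Ioo_subset_Ioc_self)
    · exact (chebW_contOn.mono (by intro x hx; simp only [mem_Ioo] at *; constructor <;> linarith [hx.1, hx.2])).aestronglyMeasurable measurableSet_Ioo
    · filter_upwards [ae_restrict_mem measurableSet_Ioo] with x hx
      simp only [mem_Ioo] at hx
      have h1 : (0:ℝ) < 1 - x := by linarith
      have h2 : 1 - x ≤ 1 - x ^ 2 := by nlinarith
      rw [Real.norm_eq_abs, Real.norm_eq_abs, chebW,
        abs_of_nonneg (Real.rpow_nonneg (by nlinarith : (0:ℝ) ≤ 1 - x^2) _),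
        abs_of_nonneg (Real.rpow_nonneg (by linarith : (0:ℝ) ≤ 1 - x) _)]
      exact Real.rpow_le_rpow_of_nonpos h1 h2 (by norm_num)

lemma chebW_mul_integrableOn {h : ℝ → ℝ} (hh : ContinuousOn h (Icc (-1 : ℝ) 1)) :
    IntegrableOn (fun x => chebW x * h x) (Ioo (-1 : ℝ) 1) := by
  obtain ⟨C, hC⟩ := (isCompact_Icc (a := (-1:ℝ)) (b := 1)).exists_bound_of_continuousOn hh
  apply Integrable.mono (chebW_integrableOn.mul_const C)
  · exact (chebW_contOn.mul (hh.mono Ioo_subset_Icc_self)).aestronglyMeasurable measurableSet_Ioo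
  · filter_upwards [ae_restrict_mem measurableSet_Ioo] with x hx
    have hw : 0 ≤ chebW x := Real.rpow_nonneg (by simp only [mem_Ioo] at hx; nlinarith [hx.1, hx.2]) _
    have hCx := hC x (Ioo_subset_Icc_self hx)
    have hC0 : 0 ≤ C := le_trans (norm_nonneg _) hCx
    rw [Real.norm_eq_abs, Real.norm_eq_abs, abs_mul, abs_of_nonneg hw, abs_of_nonneg (mul_nonneg hw hC0)]
    exact mul_le_mul_of_nonneg_left hCx hw

lemma cos_mem_Ioo {θ : ℝ} (h1 : 0 < θ) (h2 : θ < π) : cos θ ∈ Ioo (-1 : ℝ) 1 := by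
  constructor
  · have := Real.cos_lt_cos_of_nonneg_of_le_pi (le_of_lt h1) (le_refl π) h2
    simpa [Real.cos_pi] using this
  · have := Real.cos_lt_cos_of_nonneg_of_le_pi (le_refl 0) (le_of_lt h2) h1
    simpa [Real.cos_zero] using this

lemma chebW_cos {θ : ℝ} (h1 : 0 < θ) (h2 : θ < π) : chebW (cos θ) = (sin θ)⁻¹ := by
  have hs : 0 < sin θ := Real.sin_pos_of_pos_of_lt_pi h1 h2
  have : 1 - cos θ ^ 2 = sin θ ^ 2 := by
    have := Real.sin_sq_add_cos_sq θ; linarith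
  rw [chebW, this, neg_div, Real.rpow_neg (by positivity), ← Real.sqrt_eq_rpow,
    Real.sqrt_sq hs.le]

/-- Compact change of variables. -/
lemma compact_subst {h : ℝ → ℝ} (hh : ContinuousOn h (Icc (-1 : ℝ) 1))
    {a b : ℝ} (ha : 0 < a) (hab : a ≤ b) (hb : b < π) :
    ∫ x in cos b..cos a, chebW x * h x = ∫ θ in a..b, h (cos θ) := by
  have himg : cos '' Set.uIcc a b ⊆ Ioo (-1 : ℝ) 1 := by
    rintro x ⟨θ, hθ, rfl⟩
    rw [Set.uIcc_of_le hab] at hθ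
    exact cos_mem_Ioo (lt_of_lt_of_le ha hθ.1) (lt_of_le_of_lt hθ.2 hb)
  have key := intervalIntegral.integral_comp_smul_deriv' (a := a) (b := b)
    (f := cos) (f' := fun θ => -sin θ) (g := fun x => chebW x * h x)
    (fun x _ => Real.hasDerivAt_cos x) (by fun_prop)
    ((chebW_contOn.mul (hh.mono Ioo_subset_Icc_self)).mono himg)
  have lhs : ∫ θ in a..b, (-sin θ) • ((fun x => chebW x * h x) ∘ cos) θ
      = ∫ θ in a..b, -h (cos θ) := by
    apply intervalIntegral.integral_congr
    intro θ hθ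
    rw [Set.uIcc_of_le hab] at hθ
    have h1 : 0 < θ := lt_of_lt_of_le ha hθ.1
    have h2 : θ < π := lt_of_le_of_lt hθ.2 hb
    have hs : 0 < sin θ := Real.sin_pos_of_pos_of_lt_pi h1 h2
    simp only [Function.comp_apply, smul_eq_mul, chebW_cos h1 h2]
    field_simp
  rw [lhs] at key
  rw [intervalIntegral.integral_symm]
  rw [← key, intervalIntegral.integral_neg]
  ring

/-- Full (improper) Chebyshev substitution. -/
lemma cheb_subst {h : ℝ → ℝ} (hh : ContinuousOn h (Icc (-1 : ℝ) 1)) :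
    ∫ x in (-1 : ℝ)..1, chebW x * h x = ∫ θ in (0 : ℝ)..π, h (cos θ) := by
  set u : ℕ → ℝ := fun k => π / (2 * (k + 1)) with hu
  have hu_pos : ∀ k, 0 < u k := fun k => by positivity
  have hu_half : ∀ k, u k ≤ π / 2 := by
    intro k
    apply div_le_div_of_nonneg_left pi_pos.le (by norm_num)
    have : (0:ℝ) ≤ (k:ℝ) := Nat.cast_nonneg k
    linarith
  have hu_anti : Antitone u := by
    intro j k hjk
    apply div_le_div_of_nonneg_left pi_pos.le (by positivity)
    have : (j:ℝ) ≤ k := by exact_mod_cast hjk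
    linarith
  have hu_lim : Tendsto u atTop (𝓝 0) := by
    have h1 : Tendsto (fun k : ℕ => (k:ℝ) + 1) atTop atTop :=
      tendsto_atTop_add_const_right atTop 1 tendsto_natCast_atTop_atTop
    have h2 : Tendsto (fun k : ℕ => 2 * ((k:ℝ) + 1)) atTop atTop :=
      h1.const_mul_atTop (by norm_num)
    have h3 : Tendsto (fun k : ℕ => (2 * ((k:ℝ) + 1))⁻¹) atTop (𝓝 0) :=
      h2.inv_tendsto_atTop
    have h4 := h3.const_mul π
    rw [mul_zero] at h4
    rw [hu]
    simpa [div_eq_mul_inv] using h4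
  -- θ-side sets
  have huk_lt : ∀ k, u k ≤ π - u k := fun k => by
    have := hu_half k; linarith
  have hcos_le : ∀ k, cos (π - u k) ≤ cos (u k) := by
    intro k
    apply Real.cos_le_cos_of_nonneg_of_le_pi (hu_pos k).le (by have := hu_pos k; linarith) (huk_lt k)
  -- the two integrals as limits
  have hm1 : Monotone (fun k => Icc (u k) (π - u k)) := by
    intro j k hjk
    exact Icc_subset_Icc (hu_anti hjk) (by have := hu_anti hjk; simp only [sub_le_sub_iff_left]; linarith)
  have hm2 : Monotone (fun k => Icc (cos (π - u k)) (cos (u k))) := by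
    intro j k hjk
    have f1 := hu_half j; have f2 := hu_half k; have f3 := hu_pos j; have f4 := hu_pos k
    have f5 : u k ≤ u j := hu_anti hjk
    apply Icc_subset_Icc
    · exact Real.cos_le_cos_of_nonneg_of_le_pi (by linarith) (by linarith) (by linarith)
    · exact Real.cos_le_cos_of_nonneg_of_le_pi (by linarith) (by linarith) (by linarith)
  have hU1 : ⋃ k, Icc (u k) (π - u k) = Ioo 0 π := by
    apply Subset.antisymm
    · apply iUnion_subset; intro k
      intro θ hθ
      exact ⟨lt_of_lt_of_le (hu_pos k) hθ.1, lt_of_le_of_lt hθ.2 (by have := hu_pos k; linarith)⟩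
    · intro θ hθ
      have hpos : 0 < min θ (π - θ) := lt_min hθ.1 (by have := hθ.2; linarith)
      obtain ⟨k, hk⟩ := (hu_lim.eventually (eventually_lt_nhds hpos)).exists
      exact mem_iUnion.2 ⟨k, ⟨(lt_min_iff.1 hk).1.le, by have := (lt_min_iff.1 hk).2; linarith⟩⟩
  have hU2 : ⋃ k, Icc (cos (π - u k)) (cos (u k)) = Ioo (-1 : ℝ) 1 := by
    apply Subset.antisymm
    · apply iUnion_subset; intro k
      intro x hx
      constructor
      · calc (-1:ℝ) = cos π := (Real.cos_pi).symm
          _ < cos (π - u k) := by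
              apply Real.cos_lt_cos_of_nonneg_of_le_pi (by have := hu_pos k; have := hu_half k; linarith)
                le_rfl (by have := hu_pos k; linarith)
          _ ≤ x := hx.1
      · calc x ≤ cos (u k) := hx.2
          _ < cos 0 := Real.cos_lt_cos_of_nonneg_of_le_pi le_rfl
              (by have := hu_half k; have := pi_pos; linarith) (hu_pos k)
          _ = 1 := Real.cos_zero
    · intro x hx
      have hc1 : Tendsto (fun k => cos (u k)) atTop (𝓝 1) := by
        have := (Real.continuous_cos.tendsto 0).comp hu_lim
        simpa [Function.comp_def] using this
      have hc2 : Tendsto (fun k => cos (π - u k)) atTop (𝓝 (-1)) := by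
        have := hc1.neg
        simpa [Real.cos_pi_sub] using this
      have e1 : ∀ᶠ k in atTop, x < cos (u k) := hc1.eventually (eventually_gt_nhds hx.2)
      have e2 : ∀ᶠ k in atTop, cos (π - u k) < x := hc2.eventually (eventually_lt_nhds hx.1)
      obtain ⟨k, hk1, hk2⟩ := (e1.and e2).exists
      exact mem_iUnion.2 ⟨k, hk2.le, hk1.le⟩
  -- integrability
  have hint2 : IntegrableOn (fun x => chebW x * h x) (Ioo (-1:ℝ) 1) := chebW_mul_integrableOn hh
  have hcos_cont : ContinuousOn (fun θ => h (cos θ)) (Icc 0 π) := by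
    apply hh.comp Real.continuous_cos.continuousOn
    intro θ _
    exact ⟨Real.neg_one_le_cos θ, Real.cos_le_one θ⟩
  have hint1 : IntegrableOn (fun θ => h (cos θ)) (Ioo 0 π) :=
    (hcos_cont.integrableOn_Icc).mono_set Ioo_subset_Icc_self
  -- limits
  have t1 : Tendsto (fun k => ∫ θ in Icc (u k) (π - u k), h (cos θ)) atTop
      (𝓝 (∫ θ in Ioo 0 π, h (cos θ))) := by
    have := MeasureTheory.tendsto_setIntegral_of_monotone (fun k => measurableSet_Icc) hm1
      (by rw [hU1]; exact hint1)
    rwa [hU1] at this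
  have t2 : Tendsto (fun k => ∫ x in Icc (cos (π - u k)) (cos (u k)), chebW x * h x) atTop
      (𝓝 (∫ x in Ioo (-1:ℝ) 1, chebW x * h x)) := by
    have := MeasureTheory.tendsto_setIntegral_of_monotone (fun k => measurableSet_Icc) hm2
      (by rw [hU2]; exact hint2)
    rwa [hU2] at this
  -- equality of approximants
  have heq : ∀ k, (∫ x in Icc (cos (π - u k)) (cos (u k)), chebW x * h x)
      = ∫ θ in Icc (u k) (π - u k), h (cos θ) := by
    intro k
    rw [MeasureTheory.integral_Icc_eq_integral_Ioc, MeasureTheory.integral_Icc_eq_integral_Ioc,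
      ← intervalIntegral.integral_of_le (hcos_le k), ← intervalIntegral.integral_of_le (huk_lt k)]
    exact compact_subst hh (hu_pos k) (huk_lt k) (by have := hu_pos k; linarith)
  have : (∫ x in Ioo (-1:ℝ) 1, chebW x * h x) = ∫ θ in Ioo 0 π, h (cos θ) := by
    apply tendsto_nhds_unique t2
    simp only [heq]
    exact t1
  rw [intervalIntegral.integral_of_le (by norm_num : (-1:ℝ) ≤ 1),
    intervalIntegral.integral_of_le pi_pos.le,
    MeasureTheory.integral_Ioc_eq_integral_Ioo, MeasureTheory.integral_Ioc_eq_integral_Ioo]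
  exact this

lemma doubling {h : ℝ → ℝ} (hh : Continuous h) :
    ∫ θ in (0 : ℝ)..(2 * π), h (cos θ) = 2 * ∫ θ in (0 : ℝ)..π, h (cos θ) := by
  have hc : Continuous fun θ => h (cos θ) := hh.comp Real.continuous_cos
  have hsplit := intervalIntegral.integral_add_adjacent_intervals
    (a := (0:ℝ)) (b := π) (c := 2 * π) (μ := volume)
    (hc.intervalIntegrable 0 π) (hc.intervalIntegrable π (2*π))
  have hrefl : ∫ θ in π..(2*π), h (cos θ) = ∫ θ in (0:ℝ)..π, h (cos θ) := by
    have := intervalIntegral.integral_comp_sub_left (a := (0:ℝ)) (b := π)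
      (fun θ => h (cos θ)) (2 * π)
    rw [show 2 * π - π = π by ring, show 2 * π - 0 = 2 * π by ring] at this
    rw [← this]
    apply intervalIntegral.integral_congr
    intro θ _
    simp [Real.cos_sub, Real.cos_two_pi, Real.sin_two_pi]
  rw [← hsplit, hrefl]
  ring

/-- The elementary Fourier integral. -/
lemma elem_fourier (z : ℂ) (d : ℤ) :
    ∫ θ in (0:ℝ)..(2*π), (z * Complex.exp (d * θ * Complex.I)).re
      = if d = 0 then 2 * π * z.re else 0 := by
  have key : ∀ θ : ℝ, (z * Complex.exp (d * θ * Complex.I)).re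
      = z.re * Real.cos (d * θ) - z.im * Real.sin (d * θ) := by
    intro θ
    have : (d : ℂ) * θ * Complex.I = ((d * θ : ℝ) : ℂ) * Complex.I := by push_cast; ring
    rw [this, Complex.exp_mul_I]
    simp only [Complex.mul_re, Complex.mul_im, Complex.add_re, Complex.add_im,
      Complex.I_re, Complex.I_im, Complex.cos_ofReal_re, Complex.sin_ofReal_re,
      Complex.cos_ofReal_im, Complex.sin_ofReal_im, mul_zero, mul_one, zero_mul,
      sub_zero, add_zero, zero_add]
    try ring
  simp only [key]
  rw [intervalIntegral.integral_sub
    (by apply Continuous.intervalIntegrable; fun_prop)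
    (by apply Continuous.intervalIntegrable; fun_prop),
    intervalIntegral.integral_const_mul, intervalIntegral.integral_const_mul]
  by_cases hd : d = 0
  · subst hd
    simp
    try ring
  · have hdR : (d : ℝ) ≠ 0 := Int.cast_ne_zero.2 hd
    have hcos : ∫ θ in (0:ℝ)..(2*π), Real.cos (d * θ) = 0 := by
      rw [intervalIntegral.integral_comp_mul_left (f := fun x => Real.cos x) hdR, integral_cos,
        show (d:ℝ) * (2*π) = (2*d : ℤ) * π by push_cast; ring, Real.sin_int_mul_pi]
      simp
    have hsin : ∫ θ in (0:ℝ)..(2*π), Real.sin (d * θ) = 0 := by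
      rw [intervalIntegral.integral_comp_mul_left (f := fun x => Real.sin x) hdR, integral_sin,
        show (d:ℝ) * (2*π) = (d : ℤ) * (2 * π) by push_cast; ring, Real.cos_int_mul_two_pi]
      simp
    rw [hcos, hsin]
    simp [hd]

lemma cont_term (z : ℂ) (d : ℤ) : Continuous fun θ : ℝ => (z * Complex.exp (d * θ * Complex.I)).re := by
  apply Complex.continuous_re.comp
  apply continuous_const.mul
  apply Complex.continuous_exp.comp
  fun_prop

/-- Parseval identity for finite exponential sums over `[0, 2π]`. -/
lemma parseval_exp (s : Finset ℤ) (c : ℤ → ℂ) :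
    ∫ θ in (0:ℝ)..(2*π), ‖∑ j ∈ s, c j * Complex.exp (j * θ * Complex.I)‖^2
      = 2 * π * ∑ j ∈ s, ‖c j‖^2 := by
  have expand : ∀ θ : ℝ, ‖∑ j ∈ s, c j * Complex.exp (j * θ * Complex.I)‖^2
      = ∑ j ∈ s, ∑ k ∈ s, ((c j * (starRingEnd ℂ) (c k))
          * Complex.exp (((j - k : ℤ)) * θ * Complex.I)).re := by
    intro θ
    set f := ∑ j ∈ s, c j * Complex.exp (j * θ * Complex.I) with hf
    have h1 : (‖f‖:ℝ)^2 = (f * (starRingEnd ℂ) f).re := by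
      rw [Complex.mul_conj]
      norm_num [Complex.normSq_eq_norm_sq, ← Complex.ofReal_pow]
    rw [h1, hf, map_sum, Finset.sum_mul_sum, Complex.re_sum]
    apply Finset.sum_congr rfl; intro j _
    rw [Complex.re_sum]
    apply Finset.sum_congr rfl; intro k _
    congr 1
    have hconj : (starRingEnd ℂ) ((k:ℂ) * θ * Complex.I) = -((k:ℂ) * θ * Complex.I) := by
      simp [Complex.conj_ofReal]
    have hexp : Complex.exp ((j:ℂ) * θ * Complex.I) * Complex.exp (-((k:ℂ) * θ * Complex.I))
        = Complex.exp (((j - k : ℤ) : ℂ) * θ * Complex.I) := by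
      rw [← Complex.exp_add]; congr 1; push_cast; ring
    rw [map_mul, ← Complex.exp_conj, hconj, mul_mul_mul_comm, hexp]
  simp only [expand]
  rw [intervalIntegral.integral_finset_sum]
  swap
  · intro j _
    apply Continuous.intervalIntegrable
    exact continuous_finset_sum _ fun k _ => cont_term _ _
  have inner : ∀ j ∈ s, (∫ θ in (0:ℝ)..(2*π),
      ∑ k ∈ s, ((c j * (starRingEnd ℂ) (c k)) * Complex.exp (((j - k : ℤ)) * θ * Complex.I)).re)
      = 2 * π * ‖c j‖^2 := by
    intro j hj
    rw [intervalIntegral.integral_finset_sum (fun k _ => (cont_term _ _).intervalIntegrable _ _)]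
    have : ∀ k ∈ s, (∫ θ in (0:ℝ)..(2*π),
        ((c j * (starRingEnd ℂ) (c k)) * Complex.exp (((j - k : ℤ)) * θ * Complex.I)).re)
        = if k = j then 2 * π * ‖c j‖^2 else 0 := by
      intro k _
      rw [elem_fourier]
      by_cases hkj : k = j
      · subst hkj
        simp [Complex.mul_conj, Complex.normSq_eq_norm_sq, ← Complex.ofReal_pow]
      · rw [if_neg (by omega), if_neg hkj]
    rw [Finset.sum_congr rfl this, Finset.sum_ite_eq' s j, if_pos hj]
  rw [Finset.sum_congr rfl inner, ← Finset.mul_sum]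

/-- Expansion of `cos θ ^ i` in complex exponentials. -/
lemma cos_pow_expansion (i : ℕ) : ∃ c : ℤ → ℂ,
    (∀ j : ℤ, j ∉ Finset.Icc (-(i:ℤ)) i → c j = 0) ∧
    ∀ θ : ℝ, ((Real.cos θ : ℂ)) ^ i
      = ∑ j ∈ Finset.Icc (-(i:ℤ)) i, c j * Complex.exp (j * θ * Complex.I) := by
  induction i with
  | zero =>
      refine ⟨fun j => if j = 0 then 1 else 0, ?_, ?_⟩
      · intro j hj; simp at hj; simp [hj]
      · intro θ; simp
  | succ i ih =>
      obtain ⟨c, hc0, hc⟩ := ih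
      refine ⟨fun j => (c (j - 1) + c (j + 1)) / 2, ?_, ?_⟩
      · intro j hj
        simp only [Finset.mem_Icc, not_and_or, not_le] at hj
        have h1 : c (j - 1) = 0 := by
          apply hc0; simp only [Finset.mem_Icc, not_and_or, not_le]; push_cast at hj ⊢; omega
        have h2 : c (j + 1) = 0 := by
          apply hc0; simp only [Finset.mem_Icc, not_and_or, not_le]; push_cast at hj ⊢; omega
        show (c (j - 1) + c (j + 1)) / 2 = 0
        rw [h1, h2]; norm_num
      · intro θ
        set E : ℤ → ℂ := fun j => Complex.exp ((j : ℂ) * (θ : ℂ) * Complex.I) with hE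
        have hEmul : ∀ a b : ℤ, E a * E b = E (a + b) := by
          intro a b
          rw [hE]
          simp only
          rw [← Complex.exp_add]
          congr 1
          push_cast
          ring
        have hcos' : ((Real.cos θ : ℂ)) = (E 1 + E (-1)) / 2 := by
          rw [Complex.ofReal_cos, Complex.cos, neg_mul, hE]
          norm_num
        have step1 : ((Real.cos θ : ℂ)) ^ (i + 1)
            = ∑ t ∈ Finset.Icc (-(i:ℤ)) i, (c t * E (t + 1) + c t * E (t - 1)) / 2 := by
          rw [pow_succ, hc θ, hcos', Finset.sum_mul]
          apply Finset.sum_congr rfl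
          intro t _
          rw [sub_eq_add_neg, ← hEmul t 1, ← hEmul t (-1)]
          ring
        have reidx1 : ∑ j ∈ Finset.Icc (-((i:ℤ)+1)) ((i:ℤ)+1), c (j - 1) * E j
            = ∑ t ∈ Finset.Icc (-(i:ℤ)) i, c t * E (t + 1) := by
          rw [← Finset.sum_subset (Finset.Icc_subset_Icc (by omega) (le_refl _) :
              Finset.Icc (-(i:ℤ)+1) ((i:ℤ)+1) ⊆ Finset.Icc (-((i:ℤ)+1)) ((i:ℤ)+1))]
          · rw [show Finset.Icc (-(i:ℤ)+1) ((i:ℤ)+1) = (Finset.Icc (-(i:ℤ)) i).map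
                (addRightEmbedding 1) by rw [Finset.map_add_right_Icc],
              Finset.sum_map]
            apply Finset.sum_congr rfl
            intro t _
            simp [addRightEmbedding]
          · intro j _ hj
            rw [hc0 (j - 1) (by simp only [Finset.mem_Icc, not_and_or, not_le] at hj ⊢; omega),
              zero_mul]
        have reidx2 : ∑ j ∈ Finset.Icc (-((i:ℤ)+1)) ((i:ℤ)+1), c (j + 1) * E j
            = ∑ t ∈ Finset.Icc (-(i:ℤ)) i, c t * E (t - 1) := by
          rw [← Finset.sum_subset (Finset.Icc_subset_Icc (le_refl _) (by omega) :
              Finset.Icc (-((i:ℤ)+1)) ((i:ℤ)-1) ⊆ Finset.Icc (-((i:ℤ)+1)) ((i:ℤ)+1))]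
          · rw [show Finset.Icc (-((i:ℤ)+1)) ((i:ℤ)-1) = (Finset.Icc (-(i:ℤ)) i).map
                (addRightEmbedding (-1)) by rw [Finset.map_add_right_Icc]; congr 1 <;> ring,
              Finset.sum_map]
            apply Finset.sum_congr rfl
            intro t _
            simp only [addRightEmbedding, Function.Embedding.coeFn_mk]
            rw [show t + -1 + 1 = t by ring, show t + -1 = t - 1 by ring]
          · intro j _ hj
            rw [hc0 (j + 1) (by simp only [Finset.mem_Icc, not_and_or, not_le] at hj ⊢; omega),
              zero_mul]
        have goal_eq : ∑ j ∈ Finset.Icc (-((i:ℤ)+1)) ((i:ℤ)+1),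
            (c (j - 1) + c (j + 1)) / 2 * E j
            = ((∑ j ∈ Finset.Icc (-((i:ℤ)+1)) ((i:ℤ)+1), c (j - 1) * E j)
              + ∑ j ∈ Finset.Icc (-((i:ℤ)+1)) ((i:ℤ)+1), c (j + 1) * E j) / 2 := by
          rw [← Finset.sum_add_distrib, Finset.sum_div]
          apply Finset.sum_congr rfl
          intro j _
          ring
        have : ((i:ℤ)+1) = ((i+1 : ℕ) : ℤ) := by push_cast; ring
        rw [show (-((i+1:ℕ):ℤ)) = -((i:ℤ)+1) by push_cast; ring, ← this] at *
        rw [step1, goal_eq, reidx1, reidx2, ← Finset.sum_add_distrib, Finset.sum_div]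
        try (apply Finset.sum_congr rfl; intro t _; ring)

/-- Extended expansion with fixed index box. -/
lemma cos_pow_expansion' (n : ℕ) : ∃ cc : ℕ → ℤ → ℂ,
    ∀ i : ℕ, i ≤ n → ∀ θ : ℝ, ((Real.cos θ : ℂ)) ^ i
      = ∑ j ∈ Finset.Icc (-(n:ℤ)) n, cc i j * Complex.exp (j * θ * Complex.I) := by
  choose cc hcc0 hcc using cos_pow_expansion
  refine ⟨cc, fun i hi θ => ?_⟩
  rw [hcc i θ]
  apply Finset.sum_subset (Finset.Icc_subset_Icc (by exact_mod_cast neg_le_neg (Int.ofNat_le.2 hi))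
    (by exact_mod_cast Int.ofNat_le.2 hi))
  intro j _ hj
  rw [hcc0 i j hj, zero_mul]

lemma biv_expansion (n m : ℕ) (P : MvPolynomial (Fin 2) ℝ)
    (hn : P.degreeOf 0 ≤ n) (hm : P.degreeOf 1 ≤ m) :
    ∃ c : ℤ → ℤ → ℂ, ∀ θ φ : ℝ,
    ((MvPolynomial.eval ![Real.cos θ, Real.cos φ] P : ℝ) : ℂ)
      = ∑ j ∈ Finset.Icc (-(n:ℤ)) n, ∑ l ∈ Finset.Icc (-(m:ℤ)) m,
          c j l * Complex.exp (j * θ * Complex.I) * Complex.exp (l * φ * Complex.I) := by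
  obtain ⟨cc, hcc⟩ := cos_pow_expansion' n
  obtain ⟨dd, hdd⟩ := cos_pow_expansion' m
  refine ⟨fun j l => ∑ d ∈ P.support, ((MvPolynomial.coeff d P : ℝ) : ℂ) * cc (d 0) j * dd (d 1) l,
    fun θ φ => ?_⟩
  have heval : ((MvPolynomial.eval ![Real.cos θ, Real.cos φ] P : ℝ) : ℂ)
      = ∑ d ∈ P.support, ((MvPolynomial.coeff d P : ℝ) : ℂ)
          * ((Real.cos θ : ℂ)) ^ (d 0) * ((Real.cos φ : ℂ)) ^ (d 1) := by
    rw [MvPolynomial.eval_eq']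
    push_cast
    apply Finset.sum_congr rfl
    intro d _
    rw [Fin.prod_univ_two]
    simp only [Matrix.cons_val_zero, Matrix.cons_val_one, Matrix.head_cons]
    push_cast
    ring
  rw [heval]
  have hterm : ∀ d ∈ P.support,
      ((MvPolynomial.coeff d P : ℝ) : ℂ) * ((Real.cos θ : ℂ)) ^ (d 0) * ((Real.cos φ : ℂ)) ^ (d 1)
      = ∑ j ∈ Finset.Icc (-(n:ℤ)) n, ∑ l ∈ Finset.Icc (-(m:ℤ)) m,
          ((MvPolynomial.coeff d P : ℝ) : ℂ) * cc (d 0) j * dd (d 1) l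
            * Complex.exp (j * θ * Complex.I) * Complex.exp (l * φ * Complex.I) := by
    intro d hd
    have h0 : d 0 ≤ n := le_trans (MvPolynomial.monomial_le_degreeOf 0 hd) hn
    have h1 : d 1 ≤ m := le_trans (MvPolynomial.monomial_le_degreeOf 1 hd) hm
    rw [hcc (d 0) h0 θ, hdd (d 1) h1 φ, mul_assoc, Finset.sum_mul_sum, Finset.mul_sum]
    apply Finset.sum_congr rfl
    intro j _
    rw [Finset.mul_sum]
    apply Finset.sum_congr rfl
    intro l _
    ring
  rw [Finset.sum_congr rfl hterm, Finset.sum_comm]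
  apply Finset.sum_congr rfl
  intro j _
  rw [Finset.sum_comm]
  apply Finset.sum_congr rfl
  intro l _
  rw [Finset.sum_mul, Finset.sum_mul]

set_option maxHeartbeats 2000000 in
/-- For any bivariate polynomial `P` of degree at most `n` in the first variable and at
most `m` in the second, `‖P‖_∞ ≤ (2/π) √((n+1)(m+1)) ‖P‖_{L_{2,ω}}` on `Q = [-1,1]²`. -/
theorem sup_le_weighted_L2 (n m : ℕ) (P : MvPolynomial (Fin 2) ℝ)
    (hn : P.degreeOf 0 ≤ n) (hm : P.degreeOf 1 ≤ m) :
    ∀ t ∈ Set.Icc (-1 : ℝ) 1, ∀ τ ∈ Set.Icc (-1 : ℝ) 1,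
      |MvPolynomial.eval ![t, τ] P| ≤
        (2 / π) * Real.sqrt (((n : ℝ) + 1) * ((m : ℝ) + 1)) *
          Real.sqrt (∫ t' in (-1 : ℝ)..1, ∫ τ' in (-1 : ℝ)..1,
            chebWeight2 t' τ' * (MvPolynomial.eval ![t', τ'] P) ^ 2) := by
  intro t ht τ hτ
  -- continuity of the evaluation
  have hp : Continuous fun x : ℝ × ℝ => MvPolynomial.eval ![x.1, x.2] P := by
    apply (MvPolynomial.continuous_eval (p := P)).comp
    apply continuous_pi
    intro i
    fin_cases i
    · exact continuous_fst
    · exact continuous_snd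
  obtain ⟨q, hq, hq'⟩ : ∃ q : ℝ → ℝ → ℝ, Continuous (fun x : ℝ × ℝ => q x.1 x.2) ∧
      ∀ a b : ℝ, q a b = (MvPolynomial.eval ![a, b] P) ^ 2 :=
    ⟨fun a b => (MvPolynomial.eval ![a, b] P) ^ 2, hp.pow 2, fun _ _ => rfl⟩
  set I : ℝ := ∫ t' in (-1 : ℝ)..1, ∫ τ' in (-1 : ℝ)..1,
      chebWeight2 t' τ' * (MvPolynomial.eval ![t', τ'] P) ^ 2 with hI
  -- G : partially integrated function
  set G : ℝ → ℝ := fun s => ∫ φ in (0:ℝ)..π, q s (cos φ) with hG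
  have hGcont : Continuous G := by
    rw [hG]
    apply intervalIntegral.continuous_parametric_intervalIntegral_of_continuous'
      (μ := volume) (f := fun s φ => q s (cos φ))
    show Continuous fun p : ℝ × ℝ => q p.1 (cos p.2)
    exact hq.comp (show Continuous fun p : ℝ × ℝ => (p.1, Real.cos p.2) by fun_prop)
  -- Step 1 : I = ∫∫ over [0,π]²
  have step1 : I = ∫ θ in (0:ℝ)..π, G (cos θ) := by
    rw [hI]
    have inner_eq : ∀ s : ℝ, (∫ τ' in (-1 : ℝ)..1,
        chebWeight2 s τ' * (MvPolynomial.eval ![s, τ'] P) ^ 2) = chebW s * G s := by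
      intro s
      have : ∀ τ' : ℝ, chebWeight2 s τ' * (MvPolynomial.eval ![s, τ'] P) ^ 2
          = chebW s * (chebW τ' * q s τ') := by
        intro τ'; rw [chebWeight2, chebW, chebW, hq']; ring
      rw [intervalIntegral.integral_congr (fun x _ => this x), intervalIntegral.integral_const_mul]
      congr 1
      rw [hG]
      apply cheb_subst
      exact (hq.comp (Continuous.prodMk_right s)).continuousOn
    rw [intervalIntegral.integral_congr (fun x _ => inner_eq x)]
    exact cheb_subst hGcont.continuousOn
  -- Step 2 : doubling in both variables
  have step2 : ∫ θ in (0:ℝ)..(2*π), ∫ φ in (0:ℝ)..(2*π), q (cos θ) (cos φ) = 4 * I := by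
    have inner_eq : ∀ θ : ℝ, (∫ φ in (0:ℝ)..(2*π), q (cos θ) (cos φ)) = 2 * G (cos θ) := by
      intro θ
      rw [hG]
      exact doubling (hq.comp (Continuous.prodMk_right (cos θ)))
    rw [intervalIntegral.integral_congr (fun x _ => inner_eq x),
      intervalIntegral.integral_const_mul, doubling hGcont, step1]
    ring
  -- Fourier expansion
  obtain ⟨c, hc⟩ := biv_expansion n m P hn hm
  set s1 : Finset ℤ := Finset.Icc (-(n:ℤ)) n with hs1
  set s2 : Finset ℤ := Finset.Icc (-(m:ℤ)) m with hs2
  -- pointwise square as norm-square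
  have hsq : ∀ θ φ : ℝ, q (cos θ) (cos φ)
      = ‖∑ l ∈ s2, (∑ j ∈ s1, c j l * Complex.exp (j * θ * Complex.I))
          * Complex.exp (l * φ * Complex.I)‖^2 := by
    intro θ φ
    have swap : ∑ l ∈ s2, (∑ j ∈ s1, c j l * Complex.exp (j * θ * Complex.I))
          * Complex.exp (l * φ * Complex.I)
        = ∑ j ∈ s1, ∑ l ∈ s2,
          c j l * Complex.exp (j * θ * Complex.I) * Complex.exp (l * φ * Complex.I) := by
      rw [Finset.sum_comm]
      apply Finset.sum_congr rfl
      intro l _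
      rw [Finset.sum_mul]
    rw [hq', swap, ← hc θ φ, Complex.norm_real, Real.norm_eq_abs, sq_abs]
  -- Parseval in two steps
  have parse : ∫ θ in (0:ℝ)..(2*π), ∫ φ in (0:ℝ)..(2*π), q (cos θ) (cos φ)
      = 4 * π^2 * ∑ l ∈ s2, ∑ j ∈ s1, ‖c j l‖^2 := by
    have inner_eq : ∀ θ : ℝ, (∫ φ in (0:ℝ)..(2*π), q (cos θ) (cos φ))
        = 2 * π * ∑ l ∈ s2, ‖∑ j ∈ s1, c j l * Complex.exp (j * θ * Complex.I)‖^2 := by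
      intro θ
      rw [intervalIntegral.integral_congr (fun φ _ => hsq θ φ)]
      exact parseval_exp s2 _
    rw [intervalIntegral.integral_congr (fun θ _ => inner_eq θ),
      intervalIntegral.integral_const_mul, intervalIntegral.integral_finset_sum]
    swap
    · intro l _
      apply Continuous.intervalIntegrable
      apply Continuous.pow
      apply Continuous.norm
      apply continuous_finset_sum
      intro j _
      apply continuous_const.mul
      apply Complex.continuous_exp.comp
      fun_prop
    have : ∀ l ∈ s2, (∫ θ in (0:ℝ)..(2*π),
        ‖∑ j ∈ s1, c j l * Complex.exp (j * θ * Complex.I)‖^2)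
        = 2 * π * ∑ j ∈ s1, ‖c j l‖^2 := fun l _ => parseval_exp s1 _
    rw [Finset.sum_congr rfl this, ← Finset.mul_sum]
    ring
  have hSigma : ∑ l ∈ s2, ∑ j ∈ s1, ‖c j l‖^2 = I / π^2 := by
    have h4 : 4 * π^2 * ∑ l ∈ s2, ∑ j ∈ s1, ‖c j l‖^2 = 4 * I := by rw [← parse, step2]
    have hπ : (π:ℝ)^2 ≠ 0 := by positivity
    field_simp at h4 ⊢
    linarith
  have hSigma_nonneg : 0 ≤ ∑ l ∈ s2, ∑ j ∈ s1, ‖c j l‖^2 :=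
    Finset.sum_nonneg fun l _ => Finset.sum_nonneg fun j _ => sq_nonneg _
  have hI_nonneg : 0 ≤ I := by
    have := hSigma
    nlinarith [sq_nonneg π, pi_pos, hSigma_nonneg, mul_pos pi_pos pi_pos]
  -- pointwise estimate
  set θ := Real.arccos t with hθ
  set φ := Real.arccos τ with hφ
  have ht' : cos θ = t := Real.cos_arccos ht.1 ht.2
  have hτ' : cos φ = τ := Real.cos_arccos hτ.1 hτ.2
  have expand := hc θ φ
  have bound1 : |MvPolynomial.eval ![t, τ] P| ≤ ∑ j ∈ s1, ∑ l ∈ s2, ‖c j l‖ := by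
    calc |MvPolynomial.eval ![t, τ] P|
        = ‖((MvPolynomial.eval ![cos θ, cos φ] P : ℝ) : ℂ)‖ := by
          rw [Complex.norm_real, Real.norm_eq_abs, ht', hτ']
      _ = ‖∑ j ∈ s1, ∑ l ∈ s2, c j l * Complex.exp (j * θ * Complex.I)
            * Complex.exp (l * φ * Complex.I)‖ := by rw [expand]
      _ ≤ ∑ j ∈ s1, ‖∑ l ∈ s2, c j l * Complex.exp (j * θ * Complex.I)
            * Complex.exp (l * φ * Complex.I)‖ := norm_sum_le _ _
      _ ≤ ∑ j ∈ s1, ∑ l ∈ s2, ‖c j l * Complex.exp (j * θ * Complex.I)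
            * Complex.exp (l * φ * Complex.I)‖ :=
          Finset.sum_le_sum fun j _ => norm_sum_le _ _
      _ = ∑ j ∈ s1, ∑ l ∈ s2, ‖c j l‖ := by
          apply Finset.sum_congr rfl; intro j _
          apply Finset.sum_congr rfl; intro l _
          rw [norm_mul, norm_mul,
            show (j:ℂ) * θ * Complex.I = ((j * θ : ℝ) : ℂ) * Complex.I by push_cast; ring,
            show (l:ℂ) * φ * Complex.I = ((l * φ : ℝ) : ℂ) * Complex.I by push_cast; ring,
            Complex.norm_exp_ofReal_mul_I, Complex.norm_exp_ofReal_mul_I]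
          ring
  -- Cauchy–Schwarz
  have card1 : (s1.card : ℝ) = 2 * n + 1 := by
    rw [hs1, Int.card_Icc]
    have : ((n:ℤ) + 1 - -(n:ℤ)).toNat = 2 * n + 1 := by omega
    rw [this]; push_cast; ring
  have card2 : (s2.card : ℝ) = 2 * m + 1 := by
    rw [hs2, Int.card_Icc]
    have : ((m:ℤ) + 1 - -(m:ℤ)).toNat = 2 * m + 1 := by omega
    rw [this]; push_cast; ring
  have cs : (∑ j ∈ s1, ∑ l ∈ s2, ‖c j l‖)^2
      ≤ ((2*n+1) * (2*m+1)) * ∑ l ∈ s2, ∑ j ∈ s1, ‖c j l‖^2 := by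
    have hprod : ∑ j ∈ s1, ∑ l ∈ s2, ‖c j l‖
        = ∑ p ∈ s1 ×ˢ s2, (1 : ℝ) * ‖c p.1 p.2‖ := by
      rw [Finset.sum_product]
      simp
    have hprod2 : ∑ l ∈ s2, ∑ j ∈ s1, ‖c j l‖^2
        = ∑ p ∈ s1 ×ˢ s2, ‖c p.1 p.2‖^2 := by
      rw [Finset.sum_product]
      exact Finset.sum_comm
    have := Finset.sum_mul_sq_le_sq_mul_sq (s1 ×ˢ s2) (fun _ => (1:ℝ))
      (fun p => ‖c p.1 p.2‖)
    rw [hprod, hprod2]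
    calc (∑ p ∈ s1 ×ˢ s2, (1:ℝ) * ‖c p.1 p.2‖)^2
        ≤ (∑ p ∈ s1 ×ˢ s2, (1:ℝ)^2) * ∑ p ∈ s1 ×ˢ s2, ‖c p.1 p.2‖^2 := this
      _ = ((2*n+1) * (2*m+1)) * ∑ p ∈ s1 ×ˢ s2, ‖c p.1 p.2‖^2 := by
          rw [Finset.sum_const]
          congr 1
          rw [Finset.card_product]
          push_cast [card1, card2]
          simp [card1, card2]
          try ring
  have bound2 : ∑ j ∈ s1, ∑ l ∈ s2, ‖c j l‖
      ≤ Real.sqrt ((2*n+1) * (2*m+1)) * Real.sqrt (I / π^2) := by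
    have hS_nonneg : 0 ≤ ∑ j ∈ s1, ∑ l ∈ s2, ‖c j l‖ :=
      Finset.sum_nonneg fun j _ => Finset.sum_nonneg fun l _ => norm_nonneg _
    rw [← Real.sqrt_mul_self hS_nonneg]
    rw [← hSigma]
    rw [← Real.sqrt_mul (by positivity)]
    apply Real.sqrt_le_sqrt
    calc (∑ j ∈ s1, ∑ l ∈ s2, ‖c j l‖) * (∑ j ∈ s1, ∑ l ∈ s2, ‖c j l‖)
        = (∑ j ∈ s1, ∑ l ∈ s2, ‖c j l‖)^2 := (sq _).symm
      _ ≤ _ := cs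
  -- final computation
  have sqrtI : Real.sqrt (I / π^2) = Real.sqrt I / π := by
    rw [Real.sqrt_div hI_nonneg, Real.sqrt_sq pi_pos.le]
  have sqrt_card : Real.sqrt ((2*(n:ℝ)+1) * (2*(m:ℝ)+1)) ≤ 2 * Real.sqrt (((n:ℝ)+1) * ((m:ℝ)+1)) := by
    have h1 : ((2*(n:ℝ)+1) * (2*(m:ℝ)+1)) ≤ 4 * (((n:ℝ)+1) * ((m:ℝ)+1)) := by
      have h2 : (0:ℝ) ≤ n := Nat.cast_nonneg n
      have h3 : (0:ℝ) ≤ m := Nat.cast_nonneg m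
      nlinarith
    calc Real.sqrt ((2*(n:ℝ)+1) * (2*(m:ℝ)+1)) ≤ Real.sqrt (4 * (((n:ℝ)+1) * ((m:ℝ)+1))) :=
          Real.sqrt_le_sqrt h1
      _ = 2 * Real.sqrt (((n:ℝ)+1) * ((m:ℝ)+1)) := by
          rw [show (4:ℝ) = 2^2 by norm_num, Real.sqrt_mul (by positivity), Real.sqrt_sq (by norm_num)]
  calc |MvPolynomial.eval ![t, τ] P|
      ≤ ∑ j ∈ s1, ∑ l ∈ s2, ‖c j l‖ := bound1
    _ ≤ Real.sqrt ((2*n+1) * (2*m+1)) * Real.sqrt (I / π^2) := bound2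
    _ = Real.sqrt ((2*(n:ℝ)+1) * (2*(m:ℝ)+1)) * (Real.sqrt I / π) := by rw [sqrtI]
    _ ≤ (2 * Real.sqrt (((n:ℝ)+1) * ((m:ℝ)+1))) * (Real.sqrt I / π) := by
        apply mul_le_mul_of_nonneg_right sqrt_card
        positivity
    _ = (2 / π) * Real.sqrt (((n : ℝ) + 1) * ((m : ℝ) + 1)) * Real.sqrt I := by
        field_simp
        try ring
end

section
/- Let r ≥ 1, γ ≥ 1, 1 < p < ∞, and suppose the doubly-indexed sequence ξ_{k,j} satisfies (Σ_{k,j}|ξ_{k,j}|^p)^{1/p} ≤ δ. Then Σ_{j=0}^{⌊(n/r)^{1/γ}⌋} Σ_{l=0}^{⌊n/j̲^γ⌋ - r} (Σ_{k=l+r}^{⌊n/j̲^γ⌋} |ξ_{k,j}| k^{2r-1})² ≤ c·δ²·n^{4r - 2/p + 1}, where j̲ = max{1,j} and c depends only on r, p, γ. -/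
open Real Finset

/-- Quantitative data-error propagation bound for the hyperbolic-cross truncation method:
if the double sequence of errors satisfies `(Σ_{k,j}|ξ_{k,j}|^p)^{1/p} ≤ δ`, `1 < p < ∞`,
then `Σ_{j≤(n/r)^{1/γ}} Σ_{l≤n/j̲^γ - r} (Σ_{k=l+r}^{n/j̲^γ} |ξ_{k,j}| k^{2r-1})²
≤ c δ² n^{4r-2/p+1}` with `c = c(r,p,γ)` and `j̲ = max{1,j}`. -/
theorem hyperbolic_cross_data_error (r : ℕ) (hr : 1 ≤ r) (p γ : ℝ) (hp : 1 < p)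
    (hγ : 1 ≤ γ) :
    ∃ c : ℝ, 0 < c ∧ ∀ (n : ℕ) (δ : ℝ) (ξ : ℕ × ℕ → ℝ),
      Summable (fun kj : ℕ × ℕ => |ξ kj| ^ p) →
      (∑' kj : ℕ × ℕ, |ξ kj| ^ p) ^ (1 / p) ≤ δ →
      ∑ j ∈ Finset.range (⌊((n : ℝ) / (r : ℝ)) ^ (1 / γ)⌋₊ + 1),
        ∑ l ∈ Finset.range (⌊(n : ℝ) / (max 1 j : ℝ) ^ γ⌋₊ - r + 1),
          (∑ k ∈ Finset.Icc (l + r) ⌊(n : ℝ) / (max 1 j : ℝ) ^ γ⌋₊,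
              |ξ (k, j)| * (k : ℝ) ^ (2 * (r : ℝ) - 1)) ^ 2 ≤
        c * δ ^ 2 * (n : ℝ) ^ (4 * (r : ℝ) - 2 / p + 1) := by
  have hp0 : (0:ℝ) < p := zero_lt_one.trans hp
  set q : ℝ := p / (p - 1) with hq_def
  have hpq : p.HolderConjugate q := Real.HolderConjugate.conjExponent hp
  have hq0 : (0:ℝ) < q := hpq.symm.pos
  have hq_ne : q ≠ 0 := ne_of_gt hq0
  have hr1 : (1:ℝ) ≤ (r:ℝ) := by exact_mod_cast hr
  set s : ℝ := 4 * (r:ℝ) - 2 / p + 1 with hs_def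
  have h2p : 2 / p < 2 := by
    rw [div_lt_iff₀ hp0]; nlinarith
  have hs1 : 1 < s := by simp only [hs_def]; nlinarith
  have hs0 : 0 < s := lt_trans one_pos hs1
  have hγs : 1 < γ * s := by nlinarith
  -- the tail sum constant
  set fT : ℕ → ℝ := fun j => (max 1 (j:ℝ)) ^ (-(γ * s)) with hfT_def
  have hsum_fT : Summable fT := by
    have h2 : Summable (fun m : ℕ => (m:ℝ) ^ (-(γ*s))) :=
      Real.summable_nat_rpow.mpr (by linarith)
    have h3 : Summable (fun m : ℕ => fT (m + 1)) := by
      refine ((summable_nat_add_iff 1).mpr h2).congr fun m => ?_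
      simp only [hfT_def]
      rw [max_eq_right]
      push_cast
      linarith
    exact (summable_nat_add_iff 1).mp h3
  set T : ℝ := ∑' j, fT j with hT_def
  have hT0 : 0 ≤ T := tsum_nonneg fun j => Real.rpow_nonneg (le_trans zero_le_one (le_max_left _ _)) _
  set K : ℝ := 2 ^ (1 + 2/q) with hK_def
  have hK0 : 0 < K := Real.rpow_pos_of_pos two_pos _
  refine ⟨K * (T + 1), by positivity, ?_⟩
  intro n δ ξ hsum hδ
  have htsum0 : 0 ≤ ∑' kj : ℕ × ℕ, |ξ kj| ^ p :=
    tsum_nonneg fun kj => Real.rpow_nonneg (abs_nonneg _) _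
  have hδ0 : 0 ≤ δ := le_trans (Real.rpow_nonneg htsum0 _) hδ
  -- per-j bound
  have key : ∀ j : ℕ,
      ∑ l ∈ Finset.range (⌊(n : ℝ) / (max 1 j : ℝ) ^ γ⌋₊ - r + 1),
          (∑ k ∈ Finset.Icc (l + r) ⌊(n : ℝ) / (max 1 j : ℝ) ^ γ⌋₊,
              |ξ (k, j)| * (k : ℝ) ^ (2 * (r : ℝ) - 1)) ^ 2 ≤
      K * δ ^ 2 * ((n:ℝ) ^ s * fT j) := by
    intro j
    have hu1 : (1:ℝ) ≤ max 1 (j:ℝ) := le_max_left _ _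
    have hu0 : (0:ℝ) < max 1 (j:ℝ) := lt_of_lt_of_le one_pos hu1
    have huγ : (0:ℝ) < (max 1 (j:ℝ)) ^ γ := Real.rpow_pos_of_pos hu0 γ
    set M := ⌊(n : ℝ) / (max 1 j : ℝ) ^ γ⌋₊ with hM_def
    have hMle : (M:ℝ) ≤ (n:ℝ) / (max 1 (j:ℝ)) ^ γ := Nat.floor_le (by positivity)
    rcases Nat.eq_zero_or_pos M with hM0 | hM1
    · have : ∀ l ∈ Finset.range (M - r + 1),
          (∑ k ∈ Finset.Icc (l + r) M, |ξ (k, j)| * (k : ℝ) ^ (2 * (r : ℝ) - 1)) ^ 2 = 0 := by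
        intro l _
        rw [Finset.Icc_eq_empty (by omega)]
        simp
      rw [Finset.sum_congr rfl this]
      simp only [Finset.sum_const_zero]
      have : 0 ≤ fT j := Real.rpow_nonneg (by linarith) _
      positivity
    · -- main case
      have hM0R : (0:ℝ) < (M:ℝ) := by exact_mod_cast hM1
      set a : ℝ := 2 * (r:ℝ) - 1 with ha_def
      have ha1 : (1:ℝ) ≤ a := by simp only [ha_def]; linarith
      set A := Finset.range (M + 1) with hA_def
      set S : ℝ := ∑ k ∈ A, |ξ (k, j)| * (k : ℝ) ^ a with hS_def
      have hterm_nonneg : ∀ k : ℕ, 0 ≤ |ξ (k, j)| * (k : ℝ) ^ a := fun k =>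
        mul_nonneg (abs_nonneg _) (Real.rpow_nonneg (Nat.cast_nonneg _) _)
      have hinner : ∀ l, (∑ k ∈ Finset.Icc (l + r) M, |ξ (k, j)| * (k : ℝ) ^ a) ≤ S := by
        intro l
        apply Finset.sum_le_sum_of_subset_of_nonneg
        · intro k hk
          rw [Finset.mem_Icc] at hk
          rw [hA_def, Finset.mem_range]
          omega
        · intro k _ _
          exact hterm_nonneg k
      -- Hölder
      have hH : S ≤ (∑ k ∈ A, |ξ (k, j)| ^ p) ^ (1/p) * (∑ k ∈ A, ((k:ℝ) ^ a) ^ q) ^ (1/q) :=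
        Real.inner_le_Lp_mul_Lq_of_nonneg A hpq (fun k _ => abs_nonneg _)
          (fun k _ => Real.rpow_nonneg (Nat.cast_nonneg _) _)
      -- first factor
      have hF1 : (∑ k ∈ A, |ξ (k, j)| ^ p) ^ (1/p) ≤ δ := by
        refine le_trans ?_ hδ
        apply Real.rpow_le_rpow (Finset.sum_nonneg fun k _ => Real.rpow_nonneg (abs_nonneg _) _)
          ?_ (by positivity)
        have : ∑ k ∈ A, |ξ (k, j)| ^ p
            = ∑ kj ∈ A.map ⟨fun k => (k, j), fun a b h => by simpa using h⟩, |ξ kj| ^ p := by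
          rw [Finset.sum_map]
          rfl
        rw [this]
        exact Summable.sum_le_tsum _ (fun i _ => Real.rpow_nonneg (abs_nonneg _) _) hsum
      -- second factor
      have hF2 : (∑ k ∈ A, ((k:ℝ) ^ a) ^ q) ^ (1/q) ≤ 2 ^ (1/q) * (M:ℝ) ^ ((a*q + 1)/q) := by
        have hstep : ∑ k ∈ A, ((k:ℝ) ^ a) ^ q ≤ 2 * (M:ℝ) ^ (a*q + 1) := by
          have hb : ∀ k ∈ A, ((k:ℝ) ^ a) ^ q ≤ (M:ℝ) ^ (a*q) := by
            intro k hk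
            rw [hA_def, Finset.mem_range] at hk
            rw [← Real.rpow_mul (Nat.cast_nonneg k)]
            exact Real.rpow_le_rpow (Nat.cast_nonneg _) (by exact_mod_cast Nat.lt_succ_iff.mp hk)
              (by positivity)
          calc ∑ k ∈ A, ((k:ℝ) ^ a) ^ q ≤ ∑ _k ∈ A, (M:ℝ) ^ (a*q) := Finset.sum_le_sum hb
            _ = ((M:ℕ) + 1 : ℝ) * (M:ℝ) ^ (a*q) := by
                rw [Finset.sum_const, hA_def, Finset.card_range]; push_cast; ring
            _ ≤ 2 * (M:ℝ) * (M:ℝ) ^ (a*q) := by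
                have : ((M:ℕ) + 1 : ℝ) ≤ 2 * (M:ℝ) := by
                  have : (1:ℝ) ≤ (M:ℝ) := by exact_mod_cast hM1
                  linarith
                nlinarith [Real.rpow_nonneg (le_of_lt hM0R) (a*q)]
            _ = 2 * (M:ℝ) ^ (a*q + 1) := by
                rw [Real.rpow_add hM0R, Real.rpow_one]; ring
        calc (∑ k ∈ A, ((k:ℝ) ^ a) ^ q) ^ (1/q)
            ≤ (2 * (M:ℝ) ^ (a*q + 1)) ^ (1/q) := by
              apply Real.rpow_le_rpow (Finset.sum_nonneg fun k _ =>
                Real.rpow_nonneg (Real.rpow_nonneg (Nat.cast_nonneg _) _) _) hstep (by positivity)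
          _ = 2 ^ (1/q) * (M:ℝ) ^ ((a*q + 1)/q) := by
              rw [Real.mul_rpow (by norm_num) (Real.rpow_nonneg (le_of_lt hM0R) _),
                ← Real.rpow_mul (le_of_lt hM0R)]
              rw [mul_one_div]
      set E : ℝ := (a*q + 1)/q with hE_def
      have hSX : S ≤ δ * (2 ^ (1/q) * (M:ℝ) ^ E) := by
        refine le_trans hH ?_
        exact mul_le_mul hF1 hF2 (Real.rpow_nonneg (Finset.sum_nonneg fun k _ =>
          Real.rpow_nonneg (Real.rpow_nonneg (Nat.cast_nonneg _) _) _) _) hδ0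
      have hS0 : 0 ≤ S := Finset.sum_nonneg fun k _ => hterm_nonneg k
      -- sum over l
      have hl : ∑ l ∈ Finset.range (M - r + 1),
          (∑ k ∈ Finset.Icc (l + r) M, |ξ (k, j)| * (k : ℝ) ^ a) ^ 2
          ≤ (M - r + 1 : ℕ) * (δ * (2 ^ (1/q) * (M:ℝ) ^ E)) ^ 2 := by
        calc ∑ l ∈ Finset.range (M - r + 1),
            (∑ k ∈ Finset.Icc (l + r) M, |ξ (k, j)| * (k : ℝ) ^ a) ^ 2
            ≤ ∑ _l ∈ Finset.range (M - r + 1), (δ * (2 ^ (1/q) * (M:ℝ) ^ E)) ^ 2 := by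
              apply Finset.sum_le_sum
              intro l _
              exact pow_le_pow_left₀ (Finset.sum_nonneg fun k _ => hterm_nonneg k)
                (le_trans (hinner l) hSX) 2
          _ = (M - r + 1 : ℕ) * (δ * (2 ^ (1/q) * (M:ℝ) ^ E)) ^ 2 := by
              rw [Finset.sum_const, Finset.card_range, nsmul_eq_mul]
      have hcard : ((M - r + 1 : ℕ) : ℝ) ≤ 2 * (M:ℝ) := by
        have h1 : (M - r + 1 : ℕ) ≤ 2 * M := by omega
        calc ((M - r + 1 : ℕ) : ℝ) ≤ ((2 * M : ℕ) : ℝ) := by exact_mod_cast h1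
          _ = 2 * (M:ℝ) := by push_cast; ring
      have hchain : ∑ l ∈ Finset.range (M - r + 1),
          (∑ k ∈ Finset.Icc (l + r) M, |ξ (k, j)| * (k : ℝ) ^ a) ^ 2
          ≤ K * δ ^ 2 * (M:ℝ) ^ s := by
        refine le_trans hl ?_
        have hx2 : (δ * (2 ^ (1/q) * (M:ℝ) ^ E)) ^ 2
            = δ ^ 2 * (2 ^ (2/q) * (M:ℝ) ^ (2*E)) := by
          have e1 : ((2:ℝ) ^ (1/q)) ^ 2 = 2 ^ (2/q) := by
            rw [← Real.rpow_natCast ((2:ℝ) ^ (1/q)) 2, ← Real.rpow_mul (by norm_num)]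
            congr 1
            push_cast
            ring
          have e2 : ((M:ℝ) ^ E) ^ 2 = (M:ℝ) ^ (2*E) := by
            rw [← Real.rpow_natCast ((M:ℝ) ^ E) 2, ← Real.rpow_mul (le_of_lt hM0R)]
            congr 1
            push_cast
            ring
          rw [mul_pow, mul_pow, e1, e2]
        rw [hx2]
        calc ((M - r + 1 : ℕ) : ℝ) * (δ ^ 2 * (2 ^ (2/q) * (M:ℝ) ^ (2*E)))
            ≤ 2 * (M:ℝ) * (δ ^ 2 * (2 ^ (2/q) * (M:ℝ) ^ (2*E))) := by
              apply mul_le_mul_of_nonneg_right hcard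
              positivity
          _ = K * δ ^ 2 * (M:ℝ) ^ s := by
              have hKsplit : K = 2 * 2 ^ (2/q) := by
                rw [hK_def, Real.rpow_add two_pos, Real.rpow_one]
              have hMsplit : (M:ℝ) ^ s = (M:ℝ) * (M:ℝ) ^ (2*E) := by
                have hexp : s = 1 + 2*E := by
                  have hEeq : E = a + 1/q := by
                    rw [hE_def, add_div, mul_div_cancel_right₀ a hq_ne]
                  have h1q : 1/q = 1 - 1/p := by
                    have := hpq.inv_add_inv_eq_one
                    rw [one_div, one_div]
                    linarith
                  rw [hEeq, h1q, hs_def, ha_def]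
                  have : 2/p = 2 * (1/p) := by ring
                  rw [this]
                  ring
                rw [hexp, Real.rpow_add hM0R, Real.rpow_one]
              rw [hMsplit, hKsplit]
              ring
      refine le_trans hchain ?_
      -- M^s ≤ n^s * fT j
      have hMs : (M:ℝ) ^ s ≤ (n:ℝ) ^ s * fT j := by
        have h1 : (M:ℝ) ^ s ≤ ((n:ℝ) / (max 1 (j:ℝ)) ^ γ) ^ s :=
          Real.rpow_le_rpow (Nat.cast_nonneg _) hMle (le_of_lt hs0)
        have h2 : ((n:ℝ) / (max 1 (j:ℝ)) ^ γ) ^ s = (n:ℝ) ^ s * fT j := by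
          rw [Real.div_rpow (Nat.cast_nonneg _) (le_of_lt huγ),
            ← Real.rpow_mul (le_of_lt hu0), hfT_def]
          simp only []
          rw [Real.rpow_neg (le_of_lt hu0), div_eq_mul_inv]
        rw [← h2]; exact h1
      apply mul_le_mul_of_nonneg_left hMs
      positivity
  -- sum over j
  calc ∑ j ∈ Finset.range (⌊((n : ℝ) / (r : ℝ)) ^ (1 / γ)⌋₊ + 1),
        ∑ l ∈ Finset.range (⌊(n : ℝ) / (max 1 j : ℝ) ^ γ⌋₊ - r + 1),
          (∑ k ∈ Finset.Icc (l + r) ⌊(n : ℝ) / (max 1 j : ℝ) ^ γ⌋₊,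
              |ξ (k, j)| * (k : ℝ) ^ (2 * (r : ℝ) - 1)) ^ 2
      ≤ ∑ j ∈ Finset.range (⌊((n : ℝ) / (r : ℝ)) ^ (1 / γ)⌋₊ + 1),
          K * δ ^ 2 * ((n:ℝ) ^ s * fT j) := Finset.sum_le_sum fun j _ => key j
    _ = K * δ ^ 2 * (n:ℝ) ^ s *
          ∑ j ∈ Finset.range (⌊((n : ℝ) / (r : ℝ)) ^ (1 / γ)⌋₊ + 1), fT j := by
        rw [Finset.mul_sum]
        apply Finset.sum_congr rfl
        intro j _
        ring
    _ ≤ K * δ ^ 2 * (n:ℝ) ^ s * T := by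
        apply mul_le_mul_of_nonneg_left
        · exact Summable.sum_le_tsum _ (fun j _ =>
            Real.rpow_nonneg (le_trans zero_le_one (le_max_left _ _)) _) hsum_fT
        · positivity
    _ ≤ K * (T + 1) * δ ^ 2 * (n:ℝ) ^ s := by
        have h1 : T ≤ T + 1 := by linarith
        have h2 : 0 ≤ δ ^ 2 * (n:ℝ) ^ s := by positivity
        nlinarith [mul_le_mul_of_nonneg_right (mul_le_mul_of_nonneg_left h1 (le_of_lt hK0)) h2]
end
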